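/- For n ≥ 7, the list strong rainbow connection number of the wheel W_n equals the list chromatic number of the complement of the square of the cycle C_n: src^ℓ(W_n) = χ_ℓ(complement of C_n²). -/

import Mathlib

open SimpleGraph
open scoped Classical
open Fin.NatCast Fin.CommRing
set_option linter.unusedSectionVars false
set_option linter.unusedVariables false

/-- A colouring of (potential) edges makes `G` rainbow connected if every two vertices are
joined by a path whose edges receive pairwise distinct colours. -/
def IsRainbowConnected {V β : Type*} (G : SimpleGraph V) (c : Sym2 V → β) : Prop :=
  ∀ u v : V, ∃ p : G.Walk u v, p.IsPath ∧ (p.edges.map c).Nodup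

/-- Strongly rainbow connected: every two vertices are joined by a rainbow geodesic. -/
def IsStronglyRainbowConnected {V β : Type*} (G : SimpleGraph V) (c : Sym2 V → β) : Prop :=
  ∀ u v : V, ∃ p : G.Walk u v, p.IsPath ∧ p.length = G.dist u v ∧ (p.edges.map c).Nodup

/-- The rainbow connection number. -/
noncomputable def rc {V : Type*} (G : SimpleGraph V) : ℕ :=
  sInf {r : ℕ | ∃ c : Sym2 V → Fin r, IsRainbowConnected G c}

/-- The strong rainbow connection number. -/
noncomputable def src {V : Type*} (G : SimpleGraph V) : ℕ :=
  sInf {r : ℕ | ∃ c : Sym2 V → Fin r, IsStronglyRainbowConnected G c}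

/-- The list rainbow connection number. -/
noncomputable def rcl {V : Type*} (G : SimpleGraph V) : ℕ :=
  sInf {r : ℕ | ∀ L : Sym2 V → Finset ℕ, (∀ e ∈ G.edgeSet, r ≤ (L e).card) →
    ∃ c : Sym2 V → ℕ, (∀ e ∈ G.edgeSet, c e ∈ L e) ∧ IsRainbowConnected G c}

/-- The list strong rainbow connection number. -/
noncomputable def srcl {V : Type*} (G : SimpleGraph V) : ℕ :=
  sInf {r : ℕ | ∀ L : Sym2 V → Finset ℕ, (∀ e ∈ G.edgeSet, r ≤ (L e).card) →
    ∃ c : Sym2 V → ℕ, (∀ e ∈ G.edgeSet, c e ∈ L e) ∧ IsStronglyRainbowConnected G c}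

/-- The list chromatic number (choice number) of a graph. -/
noncomputable def listChromatic {V : Type*} (H : SimpleGraph V) : ℕ :=
  sInf {r : ℕ | ∀ L : V → Finset ℕ, (∀ v, r ≤ (L v).card) →
    ∃ c : V → ℕ, (∀ v, c v ∈ L v) ∧ ∀ u v, H.Adj u v → c u ≠ c v}

/-- The wheel `W n`: a cycle `C n` together with a universal hub vertex `none`. -/
def wheel (n : ℕ) : SimpleGraph (Option (Fin n)) :=
  SimpleGraph.fromRel (fun x y =>
    (∃ a b, x = some a ∧ y = some b ∧ (cycleGraph n).Adj a b) ∨ (x = none ∧ y ≠ none))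

/-- The Petersen graph as the Kneser graph `K(5,2)`. -/
def petersen : SimpleGraph {s : Finset (Fin 5) // s.card = 2} where
  Adj a b := Disjoint a.1 b.1
  symm := ⟨fun a b h => h.symm⟩
  loopless := ⟨fun a h => by
    have h0 : a.1 = ∅ := disjoint_self.mp h
    have := a.2
    rw [h0] at this
    simp at this⟩

/-- The square of the cycle `C n`: vertices at distance at most 2 are adjacent. -/
def cycleSq (n : ℕ) : SimpleGraph (Fin n) where
  Adj a b := a ≠ b ∧ (cycleGraph n).dist a b ≤ 2
  symm := by
    constructor
    intro a b h
    exact ⟨h.1.symm, by rw [SimpleGraph.dist_comm]; exact h.2⟩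
  loopless := ⟨fun a h => h.1 rfl⟩

section AuxGeneral
variable {V : Type*} {G : SimpleGraph V} {u v : V}

lemma walk_two : (p : G.Walk u v) → p.length = 2 →
    ∃ w, ∃ (h1 : G.Adj u w) (h2 : G.Adj w v), p = Walk.cons h1 (Walk.cons h2 Walk.nil)
  | .cons h1 (.cons h2 .nil), _ => ⟨_, h1, h2, rfl⟩
  | .nil, h => by simp at h
  | .cons _ .nil, h => by simp at h
  | .cons _ (.cons _ (.cons _ _)), h => by
      simp only [SimpleGraph.Walk.length_cons] at h; omega

lemma exists_mid (hne : u ≠ v) (hna : ¬ G.Adj u v) (hr : G.Reachable u v)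
    (h2 : G.dist u v ≤ 2) : ∃ w, G.Adj u w ∧ G.Adj w v := by
  have h0 : G.dist u v ≠ 0 := by
    rw [dist_ne_zero_iff_ne_and_reachable]; exact ⟨hne, hr⟩
  have h1 : G.dist u v ≠ 1 := fun h => hna (dist_eq_one_iff_adj.mp h)
  have hd2 : G.dist u v = 2 := by omega
  obtain ⟨p, hp⟩ := exists_walk_of_dist_ne_zero h0
  rw [hd2] at hp
  obtain ⟨w, hw1, hw2, -⟩ := walk_two p hp
  exact ⟨w, hw1, hw2⟩

end AuxGeneral

section AuxFin
variable {n : ℕ} [NeZero n]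

lemma fin_cast_inj {j k : ℕ} (hj : j < n) (hk : k < n) (h : (j : Fin n) = (k : Fin n)) :
    j = k := by
  have := congrArg Fin.val h
  simpa [Fin.val_natCast, Nat.mod_eq_of_lt hj, Nat.mod_eq_of_lt hk] using this

lemma cast_add_cancel {a : Fin n} {j k : ℕ} (hj : j < n) (hk : k < n)
    (h : a + (j : Fin n) = a + (k : Fin n)) : j = k :=
  fin_cast_inj hj hk (add_left_cancel h)

lemma add_nat_ne (a : Fin n) {k : ℕ} (hk0 : k ≠ 0) (hkn : k < n) : a ≠ a + (k : Fin n) := by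
  intro h
  have h' : a + ((0 : ℕ) : Fin n) = a + (k : Fin n) := by push_cast; rw [add_zero]; exact h
  exact hk0 (cast_add_cancel (Nat.pos_of_ne_zero (NeZero.ne n)) hkn h').symm

lemma fin_succ_ne (hn : 7 ≤ n) (x : Fin n) : x ≠ x + 1 := by
  have h := add_nat_ne x (k := 1) one_ne_zero (by omega)
  rwa [Nat.cast_one] at h

lemma cyc_adj (hn : 7 ≤ n) {a b : Fin n} :
    (cycleGraph n).Adj a b ↔ a = b + 1 ∨ b = a + 1 := by
  have h1 : (1 : Fin n).val = 1 := by
    rw [Fin.val_one']; exact Nat.mod_eq_of_lt (by omega)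
  rw [cycleGraph_adj']
  constructor
  · rintro (h | h)
    · left
      have : a - b = 1 := by rw [Fin.ext_iff, h1]; exact h
      rw [sub_eq_iff_eq_add] at this; rw [this]; ring
    · right
      have : b - a = 1 := by rw [Fin.ext_iff, h1]; exact h
      rw [sub_eq_iff_eq_add] at this; rw [this]; ring
  · rintro (h | h)
    · left; rw [h]; simpa [Fin.ext_iff] using h1
    · right; rw [h]; simpa [Fin.ext_iff] using h1

lemma chainWalk (hn : 7 ≤ n) (a : Fin n) (j : ℕ) :
    ∃ p : (cycleGraph n).Walk a (a + (j : Fin n)), p.length = j := by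
  induction j with
  | zero => exact ⟨Walk.nil.copy rfl (by simp), by simp⟩
  | succ j ih =>
      obtain ⟨p, hp⟩ := ih
      have hadj : (cycleGraph n).Adj (a + (j : Fin n)) (a + ((j + 1 : ℕ) : Fin n)) :=
        (cyc_adj hn).mpr (Or.inr (by push_cast; ring))
      exact ⟨p.concat hadj, by simp [hp]⟩

lemma cyc_reachable (hn : 7 ≤ n) (a b : Fin n) : (cycleGraph n).Reachable a b := by
  obtain ⟨p, -⟩ := chainWalk hn a ((b - a).val)
  exact ⟨p.copy rfl (by rw [Fin.cast_val_eq_self]; ring)⟩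

lemma cyc_dist_ge3 (hn : 7 ≤ n) {k : ℕ} (h3 : 3 ≤ k) (hkn : k + 3 ≤ n) (a : Fin n) :
    ¬ (cycleGraph n).dist a (a + (k : Fin n)) ≤ 2 := by
  intro h2
  have hne : a ≠ a + (k : Fin n) := add_nat_ne a (by omega) (by omega)
  have hna : ¬ (cycleGraph n).Adj a (a + (k : Fin n)) := by
    rw [cyc_adj hn]
    rintro (h | h)
    · have h' : a + ((k + 1 : ℕ) : Fin n) = a + ((0 : ℕ) : Fin n) := by
        push_cast; linear_combination -h
      have := cast_add_cancel (by omega) (by omega) h'; omega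
    · have h' : a + ((k : ℕ) : Fin n) = a + ((1 : ℕ) : Fin n) := by
        push_cast; linear_combination h
      have := cast_add_cancel (by omega) (by omega) h'; omega
  obtain ⟨w, hw1, hw2⟩ := exists_mid hne hna (cyc_reachable hn a _) h2
  rw [cyc_adj hn] at hw1 hw2
  rcases hw1 with h1 | h1 <;> rcases hw2 with h2' | h2'
  · -- a = w + 1, w = a + k + 1
    have h' : a + ((k + 2 : ℕ) : Fin n) = a + ((0 : ℕ) : Fin n) := by
      push_cast; linear_combination -h1 - h2'
    have := cast_add_cancel (by omega) (by omega) h'; omega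
  · -- a = w + 1, a + k = w + 1
    have h' : a + ((k : ℕ) : Fin n) = a + ((0 : ℕ) : Fin n) := by
      push_cast; linear_combination h2' - h1
    have := cast_add_cancel (by omega) (by omega) h'; omega
  · -- w = a + 1, w = a + k + 1
    have h' : a + ((k + 1 : ℕ) : Fin n) = a + ((1 : ℕ) : Fin n) := by
      push_cast; linear_combination h1 - h2'
    have := cast_add_cancel (by omega) (by omega) h'; omega
  · -- w = a + 1, a + k = w + 1
    have h' : a + ((k : ℕ) : Fin n) = a + ((2 : ℕ) : Fin n) := by
      push_cast; linear_combination h2' + h1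
    have := cast_add_cancel (by omega) (by omega) h'; omega

lemma val_add_one_of_ne (hn : 7 ≤ n) {x : Fin n} (hx : x + 1 ≠ 0) :
    (x + 1).val = x.val + 1 := by
  have h1 : (1 : Fin n).val = 1 := by
    rw [Fin.val_one']; exact Nat.mod_eq_of_lt (by omega)
  by_cases hlt : x.val + 1 < n
  · rw [Fin.val_add, h1, Nat.mod_eq_of_lt hlt]
  · exfalso
    have hxn : x.val + 1 = n := by have := x.isLt; omega
    apply hx
    rw [Fin.ext_iff, Fin.val_add, h1, hxn, Nat.mod_self]
    simp

end AuxFin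

section AuxWheel
variable {n : ℕ} [NeZero n]

lemma compl_cycleSq_adj {a b : Fin n} :
    (cycleSq n)ᶜ.Adj a b ↔ a ≠ b ∧ ¬ (cycleGraph n).dist a b ≤ 2 := by
  rw [SimpleGraph.compl_adj]
  constructor
  · rintro ⟨h1, h2⟩; exact ⟨h1, fun hd => h2 ⟨h1, hd⟩⟩
  · rintro ⟨h1, h2⟩; exact ⟨h1, fun hd => h2 hd.2⟩

lemma wheel_adj_none_some (v : Fin n) : (wheel n).Adj none (some v) := by
  rw [wheel, fromRel_adj]
  exact ⟨by simp, Or.inl (Or.inr ⟨rfl, by simp⟩)⟩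

lemma wheel_adj_some_some {a b : Fin n} :
    (wheel n).Adj (some a) (some b) ↔ (cycleGraph n).Adj a b := by
  rw [wheel, fromRel_adj]
  constructor
  · rintro ⟨hne, h | h⟩
    · rcases h with ⟨a', b', ha, hb, hadj⟩ | ⟨h, -⟩
      · rw [Option.some_inj] at ha hb; rwa [ha, hb]
      · simp at h
    · rcases h with ⟨a', b', ha, hb, hadj⟩ | ⟨h, -⟩
      · rw [Option.some_inj] at ha hb; rw [ha, hb]; exact hadj.symm
      · simp at h
  · intro h
    exact ⟨by simpa using h.ne, Or.inl (Or.inl ⟨a, b, rfl, rfl, h⟩)⟩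

lemma wheel_dist_some_some (hn : 7 ≤ n) {a b : Fin n} (hab : a ≠ b)
    (hna : ¬ (cycleGraph n).Adj a b) : (wheel n).dist (some a) (some b) = 2 := by
  have h1 : (wheel n).Adj (some a) none := (wheel_adj_none_some a).symm
  have h2 : (wheel n).Adj none (some b) := wheel_adj_none_some b
  have hle : (wheel n).dist (some a) (some b) ≤ 2 := by
    simpa using SimpleGraph.dist_le (Walk.cons h1 (Walk.cons h2 Walk.nil))
  have h0 : (wheel n).dist (some a) (some b) ≠ 0 := by
    rw [dist_ne_zero_iff_ne_and_reachable]
    exact ⟨by simp [hab], ⟨Walk.cons h1 (Walk.cons h2 Walk.nil)⟩⟩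
  have hone : (wheel n).dist (some a) (some b) ≠ 1 := by
    intro h
    exact hna (wheel_adj_some_some.mp (dist_eq_one_iff_adj.mp h))
  omega

lemma spoke_mem (v : Fin n) : s(none, some v) ∈ (wheel n).edgeSet :=
  (SimpleGraph.mem_edgeSet _).mpr (wheel_adj_none_some v)

lemma rim_mem (hn : 7 ≤ n) (i : Fin n) :
    s(some i, some (i + 1)) ∈ (wheel n).edgeSet :=
  (SimpleGraph.mem_edgeSet _).mpr (wheel_adj_some_some.mpr ((cyc_adj hn).mpr (Or.inr rfl)))

lemma wheel_edge_cases (hn : 7 ≤ n) {e : Sym2 (Option (Fin n))}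
    (he : e ∈ (wheel n).edgeSet) :
    (∃ v, e = s(none, some v)) ∨ (∃ i, e = s(some i, some (i + 1))) := by
  induction e using Sym2.ind with
  | _ x y =>
    rw [SimpleGraph.mem_edgeSet] at he
    match x, y with
    | none, none => exact absurd rfl he.ne
    | none, some b => exact Or.inl ⟨b, rfl⟩
    | some a, none => exact Or.inl ⟨a, Sym2.eq_swap⟩
    | some a, some b =>
      rw [wheel_adj_some_some, cyc_adj hn] at he
      rcases he with h | h
      · exact Or.inr ⟨b, by rw [h]; exact Sym2.eq_swap⟩
      · exact Or.inr ⟨a, by rw [h]⟩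

lemma spoke_eq {v w : Fin n}
    (h : (s(none, some v) : Sym2 (Option (Fin n))) = s(none, some w)) : v = w := by
  rw [Sym2.eq_iff] at h
  rcases h with ⟨-, h⟩ | ⟨h, -⟩ <;> simp_all

lemma rim_eq (hn : 7 ≤ n) {i j : Fin n}
    (h : (s(some i, some (i + 1)) : Sym2 (Option (Fin n))) = s(some j, some (j + 1))) :
    i = j := by
  rw [Sym2.eq_iff] at h
  rcases h with ⟨h1, -⟩ | ⟨h1, h2⟩
  · exact Option.some_inj.mp h1
  · exfalso
    rw [Option.some_inj] at h1 h2
    have h' : j + ((2 : ℕ) : Fin n) = j + ((0 : ℕ) : Fin n) := by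
      push_cast; linear_combination h2 - h1
    have := cast_add_cancel (by omega) (by omega) h'; omega

end AuxWheel

section Greedy

noncomputable def greedy (Ls : ℕ → Finset ℕ) (h : ∀ j, 2 ≤ (Ls j).card) : ℕ → ℕ
  | 0 => (Ls 0).min' (Finset.card_pos.mp (by have := h 0; omega))
  | j + 1 => ((Ls (j + 1)).erase (greedy Ls h j)).min' (Finset.card_pos.mp (by
      have h1 := Finset.pred_card_le_card_erase (s := Ls (j + 1)) (a := greedy Ls h j)
      have := h (j + 1); omega))

lemma greedy_mem (Ls : ℕ → Finset ℕ) (h : ∀ j, 2 ≤ (Ls j).card) (j : ℕ) :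
    greedy Ls h j ∈ Ls j := by
  cases j with
  | zero => exact Finset.min'_mem _ _
  | succ j => exact (Finset.mem_erase.mp (Finset.min'_mem _ _)).2

lemma greedy_ne (Ls : ℕ → Finset ℕ) (h : ∀ j, 2 ≤ (Ls j).card) (j : ℕ) :
    greedy Ls h (j + 1) ≠ greedy Ls h j :=
  (Finset.mem_erase.mp (Finset.min'_mem _ _)).1

end Greedy

section Wcol
variable {n : ℕ} [NeZero n]

noncomputable def wcol (σ : Fin n → ℕ) (g : ℕ → ℕ) (i₀ : Fin n) :
    Sym2 (Option (Fin n)) → ℕ := fun e =>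
  if h : ∃ v, e = s(none, some v) then σ h.choose
  else if h' : ∃ i, e = s(some i, some (i + 1)) then g ((h'.choose - i₀ - 1).val) else 0

lemma wcol_spoke (σ : Fin n → ℕ) (g : ℕ → ℕ) (i₀ : Fin n) (v : Fin n) :
    wcol σ g i₀ s(none, some v) = σ v := by
  have h : ∃ w, (s(none, some v) : Sym2 (Option (Fin n))) = s(none, some w) := ⟨v, rfl⟩
  rw [wcol, dif_pos h]
  exact congrArg σ (spoke_eq h.choose_spec).symm

lemma wcol_rim (hn : 7 ≤ n) (σ : Fin n → ℕ) (g : ℕ → ℕ) (i₀ : Fin n) (i : Fin n) :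
    wcol σ g i₀ s(some i, some (i + 1)) = g ((i - i₀ - 1).val) := by
  have h0 : ¬ ∃ v, (s(some i, some (i + 1)) : Sym2 (Option (Fin n))) = s(none, some v) := by
    rintro ⟨v, hv⟩; rw [Sym2.eq_iff] at hv; simp at hv
  have h : ∃ j, (s(some i, some (i + 1)) : Sym2 (Option (Fin n))) = s(some j, some (j + 1)) :=
    ⟨i, rfl⟩
  rw [wcol, dif_neg h0, dif_pos h]
  rw [← rim_eq hn h.choose_spec]

end Wcol

/-- Theorem: for `n ≥ 7`, `src^ℓ(W_n)` equals the list chromatic number of the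
complement of the square of the cycle `C_n`. -/
theorem stmt12 (n : ℕ) (hn : 7 ≤ n) :
    srcl (wheel n) = listChromatic (cycleSq n)ᶜ := by
  haveI : NeZero n := ⟨by omega⟩
  rw [srcl, listChromatic]
  congr 1
  ext r
  simp only [Set.mem_setOf_eq]
  constructor
  · -- srcl property → list colouring property
    intro hs L hL
    obtain ⟨c, hmem, hsrc⟩ := hs
      (fun e => if h : ∃ v, e = s(none, some v) then L h.choose else L 0)
      (by intro e _; split_ifs <;> exact hL _)
    refine ⟨fun v => c s(none, some v), ?_, ?_⟩
    · intro v
      have hv : ∃ w, (s(none, some v) : Sym2 (Option (Fin n))) = s(none, some w) := ⟨v, rfl⟩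
      have hm := hmem _ (spoke_mem v)
      rw [dif_pos hv, ← spoke_eq hv.choose_spec] at hm
      exact hm
    · intro u v hadj
      rw [compl_cycleSq_adj] at hadj
      obtain ⟨huv, hd⟩ := hadj
      have hna : ¬(cycleGraph n).Adj u v := by
        intro h
        have h1 : (cycleGraph n).dist u v = 1 := dist_eq_one_iff_adj.mpr h
        omega
      have hdist := wheel_dist_some_some hn huv hna
      obtain ⟨p, hp, hlen, hnd⟩ := hsrc (some u) (some v)
      rw [hdist] at hlen
      obtain ⟨w, h1, h2, rfl⟩ := walk_two p hlen
      cases w with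
      | some x =>
        exfalso
        apply hd
        have hx1 := wheel_adj_some_some.mp h1
        have hx2 := wheel_adj_some_some.mp h2
        simpa using SimpleGraph.dist_le (Walk.cons hx1 (Walk.cons hx2 Walk.nil))
      | none =>
        simp only [Walk.edges_cons, Walk.edges_nil, List.map_cons, List.map_nil,
          List.nodup_cons, List.mem_singleton, List.not_mem_nil, List.nodup_nil] at hnd
        intro hcc
        apply hnd.1
        rw [show (s(some u, none) : Sym2 (Option (Fin n))) = s(none, some u) from
          Sym2.eq_swap]
        exact hcc
  · -- list colouring property → srcl property
    intro hχ L hL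
    have hr2 : 2 ≤ r := by
      obtain ⟨c, hcm, hcp⟩ := hχ (fun _ => Finset.range r) (fun v => by simp)
      have hadj : (cycleSq n)ᶜ.Adj 0 (0 + ((3 : ℕ) : Fin n)) :=
        compl_cycleSq_adj.mpr ⟨add_nat_ne 0 (by omega) (by omega),
          cyc_dist_ge3 hn (by omega) (by omega) 0⟩
      have hne := hcp _ _ hadj
      have m1 := hcm 0
      have m2 := hcm (0 + ((3 : ℕ) : Fin n))
      rw [Finset.mem_range] at m1 m2
      omega
    obtain ⟨σ, hσm, hσp⟩ := hχ (fun v => L s(none, some v)) (fun v => hL _ (spoke_mem v))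
    obtain ⟨i₀, hi₀⟩ : ∃ i₀ : Fin n, σ i₀ ≠ σ (i₀ + ((2 : ℕ) : Fin n)) := by
      by_contra hno
      push_neg at hno
      have e1 := hno 0
      have e2 := hno (0 + ((2 : ℕ) : Fin n))
      have h04 : σ 0 = σ (0 + ((4 : ℕ) : Fin n)) := by
        rw [e1, e2]; exact congrArg σ (by push_cast; ring)
      exact hσp _ _ (compl_cycleSq_adj.mpr ⟨add_nat_ne 0 (by omega) (by omega),
        cyc_dist_ge3 hn (by omega) (by omega) 0⟩) h04
    have hLs2 : ∀ j : ℕ,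
        2 ≤ (L s(some (i₀ + 1 + (j : Fin n)), some (i₀ + 1 + (j : Fin n) + 1))).card :=
      fun j => le_trans hr2 (hL _ (rim_mem hn _))
    obtain ⟨g, hgmem', hgne⟩ : ∃ g : ℕ → ℕ,
        (∀ j : ℕ, g j ∈ L s(some (i₀ + 1 + (j : Fin n)), some (i₀ + 1 + (j : Fin n) + 1))) ∧
        ∀ j : ℕ, g (j + 1) ≠ g j :=
      ⟨greedy _ hLs2, fun j => greedy_mem _ hLs2 j, fun j => greedy_ne _ hLs2 j⟩
    have hgmem : ∀ i : Fin n, g ((i - i₀ - 1).val) ∈ L s(some i, some (i + 1)) := by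
      intro i
      have hkey : i₀ + 1 + (((i - i₀ - 1).val : ℕ) : Fin n) = i := by
        rw [Fin.cast_val_eq_self]; ring
      have hm := hgmem' ((i - i₀ - 1).val)
      rwa [hkey] at hm
    have hgkey : ∀ i : Fin n, i ≠ i₀ → g ((i + 1 - i₀ - 1).val) ≠ g ((i - i₀ - 1).val) := by
      intro i hi
      have hne0 : (i - i₀ - 1) + 1 ≠ 0 := by
        rw [show (i - i₀ - 1) + 1 = i - i₀ by ring]
        exact sub_ne_zero_of_ne hi
      have hx : i + 1 - i₀ - 1 = (i - i₀ - 1) + 1 := by ring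
      rw [hx, val_add_one_of_ne hn hne0]
      exact hgne _
    refine ⟨wcol σ g i₀, ?_, ?_⟩
    · intro e he
      rcases wheel_edge_cases hn he with ⟨v, rfl⟩ | ⟨i, rfl⟩
      · rw [wcol_spoke]; exact hσm v
      · rw [wcol_rim hn]; exact hgmem i
    · intro u v
      match u, v with
      | none, none =>
        exact ⟨Walk.nil, Walk.IsPath.nil, by simp [SimpleGraph.dist_self], by simp⟩
      | none, some b =>
        have h : (wheel n).Adj none (some b) := wheel_adj_none_some b
        refine ⟨Walk.cons h Walk.nil, ?_, ?_, by simp⟩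
        · simp [Walk.isPath_def]
        · simp [dist_eq_one_iff_adj.mpr h]
      | some a, none =>
        have h : (wheel n).Adj (some a) none := (wheel_adj_none_some a).symm
        refine ⟨Walk.cons h Walk.nil, ?_, ?_, by simp⟩
        · simp [Walk.isPath_def]
        · simp [dist_eq_one_iff_adj.mpr h]
      | some a, some b =>
        by_cases hab : a = b
        · subst hab
          exact ⟨Walk.nil, Walk.IsPath.nil, by simp [SimpleGraph.dist_self], by simp⟩
        · by_cases hAdj : (cycleGraph n).Adj a b
          · have h : (wheel n).Adj (some a) (some b) := wheel_adj_some_some.mpr hAdj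
            refine ⟨Walk.cons h Walk.nil, ?_, ?_, by simp⟩
            · simp [Walk.isPath_def, hab]
            · simp [dist_eq_one_iff_adj.mpr h]
          · have hdist := wheel_dist_some_some hn hab hAdj
            by_cases hσab : σ a = σ b
            · -- rim geodesic
              have hd2 : (cycleGraph n).dist a b ≤ 2 := by
                by_contra hd
                exact hσp a b (compl_cycleSq_adj.mpr ⟨hab, hd⟩) hσab
              obtain ⟨w, hw1, hw2⟩ := exists_mid hab hAdj (cyc_reachable hn a b) hd2
              rw [cyc_adj hn] at hw1 hw2
              rcases hw1 with h1 | h1 <;> rcases hw2 with h2 | h2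
              · -- a = w + 1, w = b + 1 : downward walk
                subst h2
                have hi : b ≠ i₀ := by
                  intro hEq
                  apply hi₀
                  rw [← hEq, show b + ((2 : ℕ) : Fin n) = b + 1 + 1 from by push_cast; ring]
                  rw [h1] at hσab
                  exact hσab.symm
                have hadj1 : (wheel n).Adj (some a) (some (b + 1)) :=
                  wheel_adj_some_some.mpr ((cyc_adj hn).mpr (Or.inl h1))
                have hadj2 : (wheel n).Adj (some (b + 1)) (some b) :=
                  wheel_adj_some_some.mpr ((cyc_adj hn).mpr (Or.inl rfl))
                refine ⟨Walk.cons hadj1 (Walk.cons hadj2 Walk.nil), ?_, by simp [hdist], ?_⟩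
                · have n1 : a ≠ b + 1 := by
                    rw [h1]; exact (fin_succ_ne hn (b + 1)).symm
                  have n2 : b + 1 ≠ b := (fin_succ_ne hn b).symm
                  simp [Walk.isPath_def, n1, n2, hab]
                · have hgoal : wcol σ g i₀ s(some a, some (b + 1)) ≠
                      wcol σ g i₀ s(some (b + 1), some b) := by
                    rw [show (s(some a, some (b + 1)) : Sym2 (Option (Fin n))) =
                        s(some (b + 1), some (b + 1 + 1)) by rw [h1]; exact Sym2.eq_swap,
                      show (s(some (b + 1), some b) : Sym2 (Option (Fin n))) =
                        s(some b, some (b + 1)) from Sym2.eq_swap,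
                      wcol_rim hn, wcol_rim hn]
                    exact hgkey b hi
                  simp [hgoal]
              · -- a = w + 1, b = w + 1 : contradiction
                exact absurd (h1.trans h2.symm) hab
              · -- w = a + 1, w = b + 1 : contradiction
                exact absurd (add_right_cancel (h1.symm.trans h2)) hab
              · -- w = a + 1, b = w + 1 : upward walk
                subst h1
                have hi : a ≠ i₀ := by
                  intro hEq
                  apply hi₀
                  rw [← hEq, show a + ((2 : ℕ) : Fin n) = a + 1 + 1 from by push_cast; ring]
                  rw [h2] at hσab
                  exact hσab
                have hadj1 : (wheel n).Adj (some a) (some (a + 1)) :=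
                  wheel_adj_some_some.mpr ((cyc_adj hn).mpr (Or.inr rfl))
                have hadj2 : (wheel n).Adj (some (a + 1)) (some b) :=
                  wheel_adj_some_some.mpr ((cyc_adj hn).mpr (Or.inr h2))
                refine ⟨Walk.cons hadj1 (Walk.cons hadj2 Walk.nil), ?_, by simp [hdist], ?_⟩
                · have n1 : a ≠ a + 1 := fin_succ_ne hn a
                  have n2 : a + 1 ≠ b := by
                    rw [h2]; exact fin_succ_ne hn (a + 1)
                  simp [Walk.isPath_def, n1, n2, hab]
                · have hgoal : wcol σ g i₀ s(some a, some (a + 1)) ≠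
                      wcol σ g i₀ s(some (a + 1), some b) := by
                    rw [show (s(some (a + 1), some b) : Sym2 (Option (Fin n))) =
                        s(some (a + 1), some (a + 1 + 1)) by rw [h2],
                      wcol_rim hn, wcol_rim hn]
                    exact (hgkey a hi).symm
                  simp [hgoal]
            · -- hub geodesic
              have hadj1 : (wheel n).Adj (some a) none := (wheel_adj_none_some a).symm
              have hadj2 : (wheel n).Adj none (some b) := wheel_adj_none_some b
              refine ⟨Walk.cons hadj1 (Walk.cons hadj2 Walk.nil), ?_, by simp [hdist], ?_⟩
              · simp [Walk.isPath_def, hab]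
              · have hgoal : wcol σ g i₀ s(some a, none) ≠ wcol σ g i₀ s(none, some b) := by
                  rw [show (s(some a, none) : Sym2 (Option (Fin n))) = s(none, some a) from
                    Sym2.eq_swap, wcol_spoke, wcol_spoke]
                  exact hσab
                simp [hgoal]
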